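/- Let J, J̃ ∈ ℂ^{k×n} with k < n both have full row rank, and let X₁, X̃₁ be orthonormal bases of the null spaces of J and J̃ respectively. If ε = ‖J - J̃‖ ≤ σ_min(J)/2, then ‖sin Θ(X₁, X̃₁)‖ ≤ 8‖J‖ε / σ_min(J)², where σ_min(J) denotes the smallest singular value of J. -/

import Mathlib

open Matrix

noncomputable def enorm {m : ℕ} (x : Fin m → ℂ) : ℝ :=
  Real.sqrt (star x ⬝ᵥ x).re

noncomputable def mnorm {m k : ℕ} (M : Matrix (Fin m) (Fin k) ℂ) : ℝ :=
  sSup {r | ∃ z : Fin k → ℂ, _root_.enorm z = 1 ∧ r = _root_.enorm (M *ᵥ z)}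

def colSpan {m k : ℕ} (U : Matrix (Fin m) (Fin k) ℂ) : Set (Fin m → ℂ) :=
  {y | ∃ z : Fin k → ℂ, y = U *ᵥ z}

noncomputable def edistS {m : ℕ} (x : Fin m → ℂ) (S : Set (Fin m → ℂ)) : ℝ :=
  sInf {r | ∃ y ∈ S, r = _root_.enorm (x - y)}

noncomputable def sinTheta {m k l : ℕ} (U : Matrix (Fin m) (Fin k) ℂ)
    (V : Matrix (Fin m) (Fin l) ℂ) : ℝ :=
  max (sSup {r | ∃ u ∈ colSpan U, _root_.enorm u = 1 ∧ r = edistS u (colSpan V)})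
      (sSup {r | ∃ v ∈ colSpan V, _root_.enorm v = 1 ∧ r = edistS v (colSpan U)})

noncomputable def sigmaMin {k m : ℕ} (J : Matrix (Fin k) (Fin m) ℂ) : ℝ :=
  sInf {r | ∃ y : Fin k → ℂ, _root_.enorm y = 1 ∧ r = _root_.enorm (Jᴴ *ᵥ y)}

/-!
If `B` has full row rank, then `u - Bᴴ (B Bᴴ)⁻¹ B u` lies in the null space of `B`, and the
correction `Bᴴ w` satisfies `‖Bᴴ w‖² = ⟪w, B u⟫` and `σ_min(B) ‖w‖ ≤ ‖Bᴴ w‖`; hence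
`σ_min(B) · dist(u, ker B) ≤ ‖B u‖`. For a unit vector `u ∈ ker J` we have `J̃ u = (J̃ - J) u`,
so `‖J̃ u‖ ≤ ε`, while Weyl's inequality `σ_min(J̃) ≥ σ_min(J) - ε ≥ σ_min(J) / 2` gives
`dist(u, ker J̃) ≤ 2ε / σ_min(J)`; the other direction is the same with the roles swapped.
Finally `2ε / σ_min(J) ≤ 8 ‖J‖ ε / σ_min(J)²` because `σ_min(J) ≤ ‖J‖`.
-/

open scoped Matrix.Norms.L2Operator

section

variable {m k n : ℕ}

lemma enorm_eq_norm_toLp (x : Fin m → ℂ) : _root_.enorm x = ‖WithLp.toLp 2 x‖ := by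
  rw [_root_.enorm, @norm_eq_sqrt_re_inner ℂ, EuclideanSpace.inner_toLp_toLp, dotProduct_comm]
  rfl

lemma enorm_nonneg (x : Fin m → ℂ) : 0 ≤ _root_.enorm x := by
  rw [enorm_eq_norm_toLp]
  exact norm_nonneg _

lemma enorm_real_smul (c : ℝ) (x : Fin m → ℂ) : _root_.enorm (c • x) = |c| * _root_.enorm x := by
  simp [enorm_eq_norm_toLp, WithLp.toLp_smul, norm_smul]

lemma exists_enorm_eq_one (hm : 0 < m) : ∃ x : Fin m → ℂ, _root_.enorm x = 1 :=
  ⟨Pi.single ⟨0, hm⟩ 1, by simp [enorm_eq_norm_toLp]⟩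

lemma enorm_mulVec_le (M : Matrix (Fin m) (Fin k) ℂ) (x : Fin k → ℂ) :
    _root_.enorm (M *ᵥ x) ≤ ‖M‖ * _root_.enorm x := by
  simpa [enorm_eq_norm_toLp] using M.l2_opNorm_mulVec (WithLp.toLp 2 x)

lemma enorm_conjTranspose_mulVec_sq_le (A : Matrix (Fin m) (Fin k) ℂ) (w : Fin m → ℂ) :
    _root_.enorm (Aᴴ *ᵥ w) ^ 2 ≤ _root_.enorm w * _root_.enorm (A *ᵥ (Aᴴ *ᵥ w)) := by
  have hinner : inner ℂ (WithLp.toLp 2 (Aᴴ *ᵥ w)) (WithLp.toLp 2 (Aᴴ *ᵥ w))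
      = inner ℂ (WithLp.toLp 2 w) (WithLp.toLp 2 (A *ᵥ (Aᴴ *ᵥ w))) := by
    simp only [EuclideanSpace.inner_toLp_toLp]
    rw [dotProduct_comm, star_mulVec, conjTranspose_conjTranspose, ← dotProduct_mulVec,
      dotProduct_comm]
  simp only [enorm_eq_norm_toLp]
  rw [@norm_sq_eq_re_inner ℂ, hinner]
  exact re_inner_le_norm _ _

lemma mnorm_eq_l2_opNorm (M : Matrix (Fin m) (Fin k) ℂ) : mnorm M = ‖M‖ := by
  rw [mnorm, Matrix.l2_opNorm_def, ← ContinuousLinearMap.sSup_sphere_eq_norm]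
  congr 1
  ext r
  simp only [Set.mem_ofPred_eq, Set.mem_image, mem_sphere_iff_norm, sub_zero, enorm_eq_norm_toLp]
  constructor
  · rintro ⟨z, hz, rfl⟩
    exact ⟨WithLp.toLp 2 z, hz, rfl⟩
  · rintro ⟨x, hx, rfl⟩
    exact ⟨x.ofLp, hx, rfl⟩

lemma isUnit_mul_conjTranspose_of_rank_eq {A : Matrix (Fin k) (Fin n) ℂ} (hA : A.rank = k) :
    IsUnit (A * Aᴴ) := by
  have hrank : (A * Aᴴ).rank = k := by
    open ComplexOrder in rw [Matrix.rank_self_mul_conjTranspose, hA]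
  have hrange : LinearMap.range (A * Aᴴ).mulVecLin = ⊤ :=
    Submodule.eq_top_of_finrank_eq (by rw [← Matrix.rank, hrank, Module.finrank_fin_fun])
  exact Matrix.mulVec_surjective_iff_isUnit.1 (LinearMap.range_eq_top.1 hrange)

lemma sigmaMin_nonneg (A : Matrix (Fin k) (Fin n) ℂ) : 0 ≤ sigmaMin A :=
  Real.sInf_nonneg fun _ ⟨_, _, hr⟩ => hr ▸ enorm_nonneg _

lemma sigmaMin_le_enorm (A : Matrix (Fin k) (Fin n) ℂ) {y : Fin k → ℂ}
    (hy : _root_.enorm y = 1) : sigmaMin A ≤ _root_.enorm (Aᴴ *ᵥ y) :=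
  csInf_le ⟨0, fun _ ⟨_, _, hr⟩ => hr ▸ enorm_nonneg _⟩ ⟨y, hy, rfl⟩

lemma le_sigmaMin (hk : 0 < k) {A : Matrix (Fin k) (Fin n) ℂ} {c : ℝ}
    (h : ∀ y : Fin k → ℂ, _root_.enorm y = 1 → c ≤ _root_.enorm (Aᴴ *ᵥ y)) :
    c ≤ sigmaMin A := by
  obtain ⟨y, hy⟩ := exists_enorm_eq_one hk
  exact le_csInf ⟨_, y, hy, rfl⟩ fun _ ⟨y, hy, hr⟩ => hr ▸ h y hy

lemma sigmaMin_mul_enorm_le (A : Matrix (Fin k) (Fin n) ℂ) (y : Fin k → ℂ) :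
    sigmaMin A * _root_.enorm y ≤ _root_.enorm (Aᴴ *ᵥ y) := by
  rcases (enorm_nonneg y).eq_or_lt with hy | hy
  · rw [← hy, mul_zero]
    exact enorm_nonneg _
  have hunit : _root_.enorm ((_root_.enorm y)⁻¹ • y) = 1 := by
    rw [enorm_real_smul, abs_inv, abs_of_pos hy, inv_mul_cancel₀ hy.ne']
  have h := sigmaMin_le_enorm A hunit
  rwa [mulVec_smul, enorm_real_smul, abs_inv, abs_of_pos hy, inv_mul_eq_div,
    le_div_iff₀ hy] at h

lemma sigmaMin_le_l2_opNorm (hk : 0 < k) (A : Matrix (Fin k) (Fin n) ℂ) :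
    sigmaMin A ≤ ‖A‖ := by
  obtain ⟨y, hy⟩ := exists_enorm_eq_one hk
  simpa [hy, Matrix.l2_opNorm_conjTranspose] using
    (sigmaMin_le_enorm A hy).trans (enorm_mulVec_le Aᴴ y)

lemma sigmaMin_pos (hk : 0 < k) {A : Matrix (Fin k) (Fin n) ℂ} (hA : IsUnit (A * Aᴴ)) :
    0 < sigmaMin A := by
  set L := (A * Aᴴ)⁻¹ * A
  have hLA : L * Aᴴ = 1 := by
    rw [Matrix.mul_assoc, Matrix.nonsing_inv_mul _ ((Matrix.isUnit_iff_isUnit_det _).1 hA)]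
  have hL : ∀ y, _root_.enorm y ≤ ‖L‖ * _root_.enorm (Aᴴ *ᵥ y) := fun y => by
    simpa [mulVec_mulVec, hLA] using enorm_mulVec_le L (Aᴴ *ᵥ y)
  obtain ⟨y, hy⟩ := exists_enorm_eq_one hk
  have hLpos : 0 < ‖L‖ := by nlinarith [hy ▸ hL y, enorm_nonneg (Aᴴ *ᵥ y)]
  refine (inv_pos.2 hLpos).trans_le (le_sigmaMin hk fun y hy => ?_)
  rw [inv_le_iff_one_le_mul₀' hLpos, ← hy]
  exact hL y

lemma sigmaMin_sub_l2_opNorm_le (hk : 0 < k) (A B : Matrix (Fin k) (Fin n) ℂ) :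
    sigmaMin A - ‖A - B‖ ≤ sigmaMin B := by
  refine le_sigmaMin hk fun y hy => ?_
  have hsplit : Aᴴ *ᵥ y = Bᴴ *ᵥ y + (A - B)ᴴ *ᵥ y := by
    rw [conjTranspose_sub, sub_mulVec, add_sub_cancel]
  have htri : _root_.enorm (Aᴴ *ᵥ y)
      ≤ _root_.enorm (Bᴴ *ᵥ y) + _root_.enorm ((A - B)ᴴ *ᵥ y) := by
    simp only [hsplit, enorm_eq_norm_toLp, WithLp.toLp_add]
    exact norm_add_le _ _
  have hAB := enorm_mulVec_le (A - B)ᴴ y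
  rw [Matrix.l2_opNorm_conjTranspose, hy, mul_one] at hAB
  linarith [sigmaMin_le_enorm A hy]

lemma edistS_nonneg (x : Fin m → ℂ) (S : Set (Fin m → ℂ)) : 0 ≤ edistS x S :=
  Real.sInf_nonneg fun _ ⟨_, _, hr⟩ => hr ▸ enorm_nonneg _

lemma edistS_le_enorm_sub {S : Set (Fin m → ℂ)} (x : Fin m → ℂ) {y : Fin m → ℂ} (hy : y ∈ S) :
    edistS x S ≤ _root_.enorm (x - y) :=
  csInf_le ⟨0, fun _ ⟨_, _, hr⟩ => hr ▸ enorm_nonneg _⟩ ⟨y, hy, rfl⟩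

lemma edistS_nonpos_of_mem {S : Set (Fin m → ℂ)} {x : Fin m → ℂ} (hx : x ∈ S) :
    edistS x S ≤ 0 :=
  (edistS_le_enorm_sub x hx).trans_eq (by simp [enorm_eq_norm_toLp])

lemma sigmaMin_mul_edistS_ker_le {A : Matrix (Fin k) (Fin n) ℂ} (hA : IsUnit (A * Aᴴ))
    (u : Fin n → ℂ) : sigmaMin A * edistS u {y | A *ᵥ y = 0} ≤ _root_.enorm (A *ᵥ u) := by
  set w := (A * Aᴴ)⁻¹ *ᵥ (A *ᵥ u)
  have hw : A *ᵥ (Aᴴ *ᵥ w) = A *ᵥ u := by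
    rw [mulVec_mulVec, mulVec_mulVec,
      Matrix.mul_nonsing_inv _ ((Matrix.isUnit_iff_isUnit_det _).1 hA), one_mulVec]
  have hker : u - Aᴴ *ᵥ w ∈ {y | A *ᵥ y = 0} := by
    simp only [Set.mem_ofPred_eq, mulVec_sub, hw, sub_self]
  have hdist : edistS u {y | A *ᵥ y = 0} ≤ _root_.enorm (Aᴴ *ᵥ w) := by
    simpa using edistS_le_enorm_sub u hker
  have hkey : sigmaMin A * _root_.enorm (Aᴴ *ᵥ w) ≤ _root_.enorm (A *ᵥ u) := by
    rcases (enorm_nonneg (Aᴴ *ᵥ w)).eq_or_lt with he | he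
    · rw [← he, mul_zero]
      exact enorm_nonneg _
    have hsq := enorm_conjTranspose_mulVec_sq_le A w
    rw [hw] at hsq
    refine le_of_mul_le_mul_right ?_ he
    nlinarith [sigmaMin_mul_enorm_le A w, enorm_nonneg (A *ᵥ u), sigmaMin_nonneg A]
  exact (mul_le_mul_of_nonneg_left hdist (sigmaMin_nonneg A)).trans hkey

lemma edistS_ker_le_norm_sub_div {A B : Matrix (Fin k) (Fin n) ℂ} (hB : IsUnit (B * Bᴴ))
    {σ : ℝ} (hσ : 0 < σ) (hσB : σ ≤ sigmaMin B) {u : Fin n → ℂ} (hu : A *ᵥ u = 0)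
    (hu1 : _root_.enorm u = 1) : edistS u {y | B *ᵥ y = 0} ≤ ‖A - B‖ / σ := by
  have hBu : B *ᵥ u = (B - A) *ᵥ u := by rw [sub_mulVec, hu, sub_zero]
  rw [le_div_iff₀' hσ]
  calc σ * edistS u {y | B *ᵥ y = 0}
      ≤ sigmaMin B * edistS u {y | B *ᵥ y = 0} :=
        mul_le_mul_of_nonneg_right hσB (edistS_nonneg _ _)
    _ ≤ _root_.enorm (B *ᵥ u) := sigmaMin_mul_edistS_ker_le hB u
    _ ≤ ‖A - B‖ := by simpa [hBu, hu1, norm_sub_rev] using enorm_mulVec_le (B - A) u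

lemma sinTheta_le {l : ℕ} {U : Matrix (Fin m) (Fin k) ℂ} {V : Matrix (Fin m) (Fin l) ℂ}
    {δ : ℝ} (hδ : 0 ≤ δ)
    (hUV : ∀ u ∈ colSpan U, _root_.enorm u = 1 → edistS u (colSpan V) ≤ δ)
    (hVU : ∀ v ∈ colSpan V, _root_.enorm v = 1 → edistS v (colSpan U) ≤ δ) :
    sinTheta U V ≤ δ :=
  max_le (Real.sSup_le (fun _ ⟨u, hu, hu1, hr⟩ => hr ▸ hUV u hu hu1) hδ)
    (Real.sSup_le (fun _ ⟨v, hv, hv1, hr⟩ => hr ▸ hVU v hv hv1) hδ)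

lemma sinTheta_nonpos_of_colSpan_eq {U V : Matrix (Fin m) (Fin k) ℂ}
    (h : colSpan U = colSpan V) : sinTheta U V ≤ 0 :=
  sinTheta_le le_rfl (fun _ hu _ => edistS_nonpos_of_mem (h ▸ hu))
    (fun _ hv _ => edistS_nonpos_of_mem (h ▸ hv))

end

theorem nullspace_perturbation_general {k n : ℕ}
    (J Jt : Matrix (Fin k) (Fin n) ℂ)
    (hJ : J.rank = k) (hJt : Jt.rank = k)
    (X₁ Xt₁ : Matrix (Fin n) (Fin (n - k)) ℂ)
    (hX₁null : colSpan X₁ = {y | J *ᵥ y = 0})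
    (hXt₁null : colSpan Xt₁ = {y | Jt *ᵥ y = 0})
    (hε : mnorm (J - Jt) ≤ sigmaMin J / 2) :
    sinTheta X₁ Xt₁ ≤ 8 * mnorm J * mnorm (J - Jt) / (sigmaMin J) ^ 2 := by
  simp only [mnorm_eq_l2_opNorm] at hε ⊢
  rcases Nat.eq_zero_or_pos k with rfl | hk
  · refine (sinTheta_nonpos_of_colSpan_eq ?_).trans (by positivity)
    rw [hX₁null, hXt₁null]
    ext y
    exact iff_of_true (Subsingleton.elim _ _) (Subsingleton.elim _ _)
  have hJunit := isUnit_mul_conjTranspose_of_rank_eq hJ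
  have hσ : 0 < sigmaMin J := sigmaMin_pos hk hJunit
  have hσt : sigmaMin J / 2 ≤ sigmaMin Jt := by linarith [sigmaMin_sub_l2_opNorm_le hk J Jt]
  refine (sinTheta_le (δ := ‖J - Jt‖ / (sigmaMin J / 2)) (by positivity) ?_ ?_).trans ?_
  · rintro u hu hu1
    rw [hX₁null] at hu
    rw [hXt₁null]
    exact edistS_ker_le_norm_sub_div (isUnit_mul_conjTranspose_of_rank_eq hJt) (half_pos hσ)
      hσt hu hu1
  · rintro v hv hv1
    rw [hXt₁null] at hv
    rw [hX₁null, norm_sub_rev]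
    exact edistS_ker_le_norm_sub_div hJunit (half_pos hσ) (half_le_self hσ.le) hv hv1
  · have hσJ := sigmaMin_le_l2_opNorm hk J
    have hεσ : 0 ≤ ‖J - Jt‖ * sigmaMin J := mul_nonneg (norm_nonneg _) hσ.le
    rw [div_le_div_iff₀ (half_pos hσ) (by positivity)]
    nlinarith [mul_le_mul_of_nonneg_left hσJ hεσ, mul_nonneg hεσ (norm_nonneg J)]

theorem nullspace_perturbation {k n : ℕ} (hkn : k < n)
    (J Jt : Matrix (Fin k) (Fin n) ℂ)
    (hJ : J.rank = k) (hJt : Jt.rank = k)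
    (X₁ Xt₁ : Matrix (Fin n) (Fin (n - k)) ℂ)
    (hX₁orth : X₁ᴴ * X₁ = 1) (hXt₁orth : Xt₁ᴴ * Xt₁ = 1)
    (hX₁null : colSpan X₁ = {y | J *ᵥ y = 0})
    (hXt₁null : colSpan Xt₁ = {y | Jt *ᵥ y = 0})
    (hε : mnorm (J - Jt) ≤ sigmaMin J / 2) :
    sinTheta X₁ Xt₁ ≤ 8 * mnorm J * mnorm (J - Jt) / (sigmaMin J) ^ 2 :=
  nullspace_perturbation_general J Jt hJ hJt X₁ Xt₁ hX₁null hXt₁null hε
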